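/- arXiv:2408.15476 — 3 statements merged into one kernel-verified Lean document; each statement's English description precedes it below -/
import Mathlib

section
/- Let 0 ≤ j ≤ n−1 be an integer and let A be a symmetric n×n matrix with entries in {0,1}, with eigenvalues λ_1 ≥ ⋯ ≥ λ_n. Then λ_1(A) − λ_{n−j}(A) ≤ (n/2)·(1 + √((j+2)/(j+1))). -/
/-!
Since `A` is a symmetric `(0,1)`-matrix, `∑ λₖ² = tr (A²) = ∑ᵢⱼ Aᵢⱼ = 𝟙ᵀ A 𝟙 ≤ n λ₁`. Put
`s = λ₁` and `t = max 0 (-λ_{n-j})`; the `j + 1` eigenvalues `λ_{n-j}, …, λₙ` all have square at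
least `t²`, so `s² + (j + 1) t² ≤ n s`. Thus `(s - n/2, t)` lies in the ellipse
`x² + (j + 1) t² ≤ n²/4`, on which Cauchy–Schwarz bounds `x + t` by `(n/2) √((j + 2)/(j + 1))`.
-/

open Matrix Finset

theorem Matrix.IsSymm.trace_mul_self_of_zero_one {n α : Type*} [Fintype n] [Semiring α]
    {A : Matrix n n α} (hA : A.IsSymm) (h01 : ∀ i j, A i j = 0 ∨ A i j = 1) :
    (A * A).trace = 1 ⬝ᵥ A *ᵥ 1 := by
  simp only [trace, diag, mul_apply, mulVec, dotProduct, Pi.one_apply, one_mul, mul_one, hA.apply]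
  refine sum_congr rfl fun i _ => sum_congr rfl fun j _ => ?_
  rcases h01 i j with h | h <;> simp [h]

namespace Matrix.IsHermitian

variable {n : Type*} [Fintype n] [DecidableEq n] {A : Matrix n n ℝ}

theorem sum_eigenvalues_sq (hA : A.IsHermitian) :
    ∑ i, hA.eigenvalues i ^ 2 = (A * A).trace := by
  conv_rhs => rw [hA.spectral_theorem, ← map_mul, Unitary.conjStarAlgAut_apply, trace_mul_cycle,
    Unitary.coe_star_mul_self, one_mul, diagonal_mul_diagonal, trace_diagonal]
  simp [sq]

open scoped MatrixOrder in
theorem dotProduct_mulVec_le (hA : A.IsHermitian) {s : ℝ} (hs : ∀ i, hA.eigenvalues i ≤ s)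
    (v : n → ℝ) : v ⬝ᵥ A *ᵥ v ≤ s * (v ⬝ᵥ v) := by
  have hle : A ≤ algebraMap ℝ _ s := by
    refine le_algebraMap_of_spectrum_le (fun x hx => ?_) hA.isSelfAdjoint
    rw [hA.spectrum_real_eq_range_eigenvalues] at hx
    obtain ⟨i, rfl⟩ := hx
    exact hs i
  simpa [Algebra.algebraMap_eq_smul_one, sub_mulVec, dotProduct_sub, smul_mulVec,
    dotProduct_smul] using (Matrix.le_iff.mp hle).dotProduct_mulVec_nonneg v

theorem sum_eigenvalues_sq_le_card_mul_of_zero_one (hA : A.IsHermitian)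
    (h01 : ∀ i j, A i j = 0 ∨ A i j = 1) {s : ℝ} (hs : ∀ i, hA.eigenvalues i ≤ s) :
    ∑ i, hA.eigenvalues i ^ 2 ≤ Fintype.card n * s := by
  have hsymm : A.IsSymm := isHermitian_iff_isSymm.mp hA
  calc ∑ i, hA.eigenvalues i ^ 2 = 1 ⬝ᵥ A *ᵥ 1 := by
        rw [hA.sum_eigenvalues_sq, hsymm.trace_mul_self_of_zero_one h01]
    _ ≤ s * (1 ⬝ᵥ 1) := hA.dotProduct_mulVec_le hs 1
    _ = Fintype.card n * s := by simp [mul_comm]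

end Matrix.IsHermitian

theorem sum_sq_le_mul_head_of_sorted_eigenvalues_of_zero_one {n : ℕ} (hn : 0 < n)
    {A : Matrix (Fin n) (Fin n) ℝ} (hA : A.IsHermitian) (h01 : ∀ i j, A i j = 0 ∨ A i j = 1)
    {μ : Fin n → ℝ} (hμ : Antitone μ)
    (hperm : univ.val.map μ = univ.val.map hA.eigenvalues) :
    ∑ k, μ k ^ 2 ≤ n * μ ⟨0, hn⟩ := by
  have hsum : ∑ k, μ k ^ 2 = ∑ k, hA.eigenvalues k ^ 2 := by
    have := congrArg (fun m => (m.map (· ^ 2)).sum) hperm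
    simp only [Multiset.map_map] at this
    exact this
  have hhead (k : Fin n) : hA.eigenvalues k ≤ μ ⟨0, hn⟩ := by
    have hk : hA.eigenvalues k ∈ univ.val.map μ := hperm ▸ Multiset.mem_map_of_mem _ (mem_univ k)
    obtain ⟨i, -, hi⟩ := Multiset.mem_map.mp hk
    exact hi ▸ hμ (Nat.zero_le i.val)
  simpa [hsum] using hA.sum_eigenvalues_sq_le_card_mul_of_zero_one h01 hhead

theorem sq_add_card_mul_sq_le_sum_sq {ι : Type*} [Fintype ι] [DecidableEq ι] (f : ι → ℝ)
    {a : ι} {S : Finset ι} (ha : a ∉ S) {t : ℝ} (ht : ∀ k ∈ S, t ^ 2 ≤ f k ^ 2) :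
    f a ^ 2 + #S * t ^ 2 ≤ ∑ k, f k ^ 2 := by
  have hS : #S * t ^ 2 ≤ ∑ k ∈ S, f k ^ 2 := by
    simpa using card_nsmul_le_sum S (fun k => f k ^ 2) _ ht
  calc f a ^ 2 + #S * t ^ 2 ≤ ∑ k ∈ insert a S, f k ^ 2 := by rw [sum_insert ha]; linarith
    _ ≤ ∑ k, f k ^ 2 := sum_le_univ_sum_of_nonneg fun k => sq_nonneg _

theorem add_le_of_sq_add_mul_sq_le {n j s t : ℝ} (hn : 0 ≤ n) (hj : 0 ≤ j)
    (h : s ^ 2 + (j + 1) * t ^ 2 ≤ n * s) :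
    s + t ≤ n / 2 * (1 + √((j + 2) / (j + 1))) := by
  have hball : (s - n / 2) ^ 2 + (j + 1) * t ^ 2 ≤ (n / 2) ^ 2 := by nlinarith
  have hsq : (s - n / 2 + t) ^ 2 ≤ (j + 2) / (j + 1) * (n / 2) ^ 2 := by
    rw [div_mul_eq_mul_div, le_div_iff₀ (by positivity)]
    nlinarith [sq_nonneg (s - n / 2 - (j + 1) * t)]
  have : s - n / 2 + t ≤ √((j + 2) / (j + 1)) * (n / 2) :=
    calc s - n / 2 + t ≤ |s - n / 2 + t| := le_abs_self _
      _ ≤ √((j + 2) / (j + 1) * (n / 2) ^ 2) := Real.abs_le_sqrt hsq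
      _ = √((j + 2) / (j + 1)) * (n / 2) := by
        rw [Real.sqrt_mul (by positivity), Real.sqrt_sq (by positivity)]
  linarith

/-- For `0 ≤ j ≤ n - 1` and a symmetric `n × n` `(0,1)`-matrix `A` with
eigenvalues `μ` in nonincreasing order, `λ_1(A) - λ_{n-j}(A) ≤ (n/2)(1 + √((j+2)/(j+1)))`. -/
theorem spread_0j_upper_bound (n j : ℕ) (hj : j + 1 ≤ n)
    (A : Matrix (Fin n) (Fin n) ℝ) (hA : A.IsHermitian)
    (hA01 : ∀ a b, A a b = 0 ∨ A a b = 1)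
    (μ : Fin n → ℝ) (hmono : Antitone μ)
    (hperm : Finset.univ.val.map μ = Finset.univ.val.map hA.eigenvalues) :
    μ ⟨0, by omega⟩ - μ ⟨n - j - 1, by omega⟩ ≤
      ((n : ℝ) / 2) * (1 + Real.sqrt (((j : ℝ) + 2) / ((j : ℝ) + 1))) := by
  set i : Fin n := ⟨n - j - 1, by omega⟩
  obtain hzero | hpos := Nat.eq_zero_or_pos (n - j - 1)
  · have : i = ⟨0, by omega⟩ := Fin.ext hzero
    rw [this, sub_self]
    positivity
  set t := max 0 (-μ i)
  have htail : ∀ k ∈ Ici i, t ^ 2 ≤ μ k ^ 2 := fun k hk => by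
    rw [← sq_abs (μ k)]
    refine pow_le_pow_left₀ (le_max_left _ _) (max_le (abs_nonneg _) ?_) 2
    exact (neg_le_neg (hmono (mem_Ici.mp hk))).trans (neg_le_abs _)
  have hsplit := sq_add_card_mul_sq_le_sum_sq μ (a := ⟨0, by omega⟩)
    (by simp [i, Fin.le_def]; omega) htail
  have hcard : (#(Ici i) : ℝ) = j + 1 := by
    rw [Fin.card_Ici]; simp only [i]; norm_cast; omega
  rw [hcard] at hsplit
  have hsum := sum_sq_le_mul_head_of_sorted_eigenvalues_of_zero_one (by omega) hA hA01 hmono hperm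
  calc μ ⟨0, _⟩ - μ i ≤ μ ⟨0, by omega⟩ + t := by linarith [le_max_right 0 (-μ i)]
    _ ≤ _ := add_le_of_sq_add_mul_sq_le (by positivity) (by positivity) (by linarith)
end

section
/- Let k ≥ 1 be an integer and let A be a symmetric n×n matrix with entries in {0,1} with 2k ≤ n, and eigenvalues λ_1 ≥ ⋯ ≥ λ_n. Then λ_{k+1}(A) − λ_{n−k+1}(A) ≤ n/√(2k). -/
/-!
Put `C = 2A - J` with `J` the all-ones matrix; it is a `±1` matrix, so that `∑ r c, C r c ^ 2 = n²`. For an orthonormal family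
`F` the numbers `⟪F l, C F l⟫` are diagonal entries of `C` in an orthonormal basis, hence
their squares sum to at most `n²`. Choose `F` to be `k` orthonormal vectors in the span of the
top `k + 1` eigenvectors of `A` that are orthogonal to the all-ones vector (there
`⟪x, C x⟫ = 2⟪x, A x⟫ ≥ 2λ_{k+1}`), together with `k` eigenvectors for the bottom `k`
eigenvalues (there `⟪x, C x⟫ ≤ 2⟪x, A x⟫ ≤ 2λ_{n-k+1}`). This gives
`4k (max λ_{k+1} 0 ^ 2 + min λ_{n-k+1} 0 ^ 2) ≤ n²`, and `(a - b)² ≤ 2 (max a 0 ^ 2 + min b 0 ^ 2)`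
for `b ≤ a` turns it into `2k (λ_{k+1} - λ_{n-k+1})² ≤ n²`.
-/

open Finset
open scoped InnerProductSpace RealInnerProductSpace

section InnerProductSpace

variable {𝕜 E ι : Type*} [RCLike 𝕜] [NormedAddCommGroup E] [InnerProductSpace 𝕜 E]

theorem Orthonormal.sumElim {κ : Type*} {v : ι → E} {w : κ → E} (hv : Orthonormal 𝕜 v)
    (hw : Orthonormal 𝕜 w) (hvw : ∀ i j, ⟪v i, w j⟫_𝕜 = 0) :
    Orthonormal 𝕜 (Sum.elim v w) := by
  refine ⟨Sum.rec hv.1 hw.1, ?_⟩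
  rintro (i | j) (i' | j') hne
  · exact hv.2 fun h => hne (congrArg Sum.inl h)
  · exact hvw i j'
  · exact inner_eq_zero_symm.1 (hvw i' j)
  · exact hw.2 fun h => hne (congrArg Sum.inr h)

theorem Orthonormal.inner_eq_zero_of_mem_span_image {v : ι → E} (hv : Orthonormal 𝕜 v)
    {s : Set ι} {i : ι} (hi : i ∉ s) {x : E} (hx : x ∈ Submodule.span 𝕜 (v '' s)) :
    ⟪v i, x⟫_𝕜 = 0 := by
  obtain ⟨l, hl, rfl⟩ := (Finsupp.mem_span_image_iff_linearCombination 𝕜).1 hx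
  exact inner_eq_zero_symm.1 (hv.inner_finsupp_eq_zero hi hl)

theorem Orthonormal.finrank_span_image {v : ι → E} (hv : Orthonormal 𝕜 v) (s : Finset ι) :
    Module.finrank 𝕜 (Submodule.span 𝕜 (v '' s)) = #s := by
  have hli : LinearIndependent 𝕜 fun i : (s : Set ι) => v i :=
    (hv.comp _ Subtype.val_injective).linearIndependent
  rw [Set.image_eq_range, finrank_span_eq_card hli]
  simp

theorem Submodule.finrank_le_finrank_inf_orthogonal_add_one [FiniteDimensional 𝕜 E]
    (V : Submodule 𝕜 E) (v : E) :
    Module.finrank 𝕜 V ≤ Module.finrank 𝕜 ↥(V ⊓ (𝕜 ∙ v)ᗮ) + 1 := by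
  have h_line : Module.finrank 𝕜 (𝕜 ∙ v) ≤ 1 := by
    simpa using finrank_span_le_card (R := 𝕜) ({v} : Set E)
  have := V.finrank_sup_add_finrank_inf_eq (𝕜 ∙ v)ᗮ
  have := (𝕜 ∙ v).finrank_add_finrank_orthogonal
  have := (V ⊔ (𝕜 ∙ v)ᗮ).finrank_le
  omega

end InnerProductSpace

section RealInnerProductSpace

variable {ι E : Type*} [Fintype ι] [NormedAddCommGroup E] [InnerProductSpace ℝ E]
  (b : OrthonormalBasis ι ℝ E) {T : E →ₗ[ℝ] E} {ev : ι → ℝ}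

theorem OrthonormalBasis.inner_apply_self_eq_sum (hb : ∀ i, T (b i) = ev i • b i) (x : E) :
    ⟪x, T x⟫ = ∑ i, ev i * ⟪b i, x⟫ ^ 2 := by
  have hTx : T x = ∑ i, (⟪b i, x⟫ * ev i) • b i := by
    conv_lhs => rw [← b.sum_repr' x]
    simp only [map_sum, map_smul, hb, smul_smul]
  simp only [hTx, inner_sum, real_inner_smul_right, real_inner_comm x]
  exact sum_congr rfl fun i _ => by ring

theorem OrthonormalBasis.mul_norm_sq_le_inner_apply_self_of_mem_span
    (hb : ∀ i, T (b i) = ev i • b i) {s : Set ι} {α : ℝ} (hs : ∀ i ∈ s, α ≤ ev i) {x : E}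
    (hx : x ∈ Submodule.span ℝ (b '' s)) :
    α * ‖x‖ ^ 2 ≤ ⟪x, T x⟫ := by
  rw [b.inner_apply_self_eq_sum hb, ← b.sum_sq_inner_right, mul_sum]
  refine sum_le_sum fun i _ => ?_
  by_cases hi : i ∈ s
  · exact mul_le_mul_of_nonneg_right (hs i hi) (sq_nonneg _)
  · simp [b.orthonormal.inner_eq_zero_of_mem_span_image hi hx]

end RealInnerProductSpace

section Matrix

variable {m : Type*} [Fintype m] [DecidableEq m]

theorem Orthonormal.sum_inner_toEuclideanLin_sq_le {ι : Type*} [Fintype ι]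
    {F : ι → EuclideanSpace ℝ m} (hF : Orthonormal ℝ F) (C : Matrix m m ℝ) :
    ∑ l, ⟪F l, Matrix.toEuclideanLin C (F l)⟫ ^ 2 ≤ ∑ r, ∑ c, C r c ^ 2 := by
  have h_row : ∀ r x,
      (Matrix.toEuclideanLin C x) r = ⟪(WithLp.toLp 2 (C r) : EuclideanSpace ℝ m), x⟫ := by
    intro r x
    simp [Matrix.mulVec, dotProduct, PiLp.inner_apply, mul_comm]
  calc ∑ l, ⟪F l, Matrix.toEuclideanLin C (F l)⟫ ^ 2
      ≤ ∑ l, ‖Matrix.toEuclideanLin C (F l)‖ ^ 2 := by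
        refine sum_le_sum fun l _ => ?_
        simpa [hF.1 l, sq_le_sq] using
          abs_real_inner_le_norm (F l) (Matrix.toEuclideanLin C (F l))
    _ = ∑ r, ∑ l, ⟪F l, (WithLp.toLp 2 (C r) : EuclideanSpace ℝ m)⟫ ^ 2 := by
        simp only [EuclideanSpace.norm_sq_eq, h_row, Real.norm_eq_abs, sq_abs, real_inner_comm]
        exact sum_comm
    _ ≤ ∑ r, ∑ c, C r c ^ 2 := by
        refine sum_le_sum fun r _ => ?_
        simpa [EuclideanSpace.norm_sq_eq] using
          hF.sum_inner_products_le (WithLp.toLp 2 (C r) : EuclideanSpace ℝ m) (s := univ)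

theorem Matrix.inner_toEuclideanLin_two_mul_sub_one (A : Matrix m m ℝ)
    (x : EuclideanSpace ℝ m) :
    ⟪x, Matrix.toEuclideanLin (Matrix.of fun i j => 2 * A i j - 1) x⟫
      = 2 * ⟪x, Matrix.toEuclideanLin A x⟫ - ⟪WithLp.toLp 2 1, x⟫ ^ 2 := by
  simp only [Matrix.toLpLin_apply, PiLp.inner_apply, Matrix.mulVec, dotProduct, Matrix.of_apply]
  simp [sq, mul_sum, sum_mul, sub_mul, sum_sub_distrib, mul_assoc]

theorem Matrix.IsHermitian.toEuclideanLin_eigenvectorBasis {A : Matrix m m ℝ}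
    (hA : A.IsHermitian) (i : m) :
    Matrix.toEuclideanLin A (hA.eigenvectorBasis i)
      = hA.eigenvalues i • hA.eigenvectorBasis i := by
  ext j
  simpa using congrFun (hA.mulVec_eigenvectorBasis i) j

theorem Matrix.IsHermitian.inner_eigenvectorBasis_toEuclideanLin {A : Matrix m m ℝ}
    (hA : A.IsHermitian) (i : m) :
    ⟪hA.eigenvectorBasis i, Matrix.toEuclideanLin A (hA.eigenvectorBasis i)⟫
      = hA.eigenvalues i := by
  rw [hA.toEuclideanLin_eigenvectorBasis, real_inner_smul_right, real_inner_self_eq_norm_sq,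
    hA.eigenvectorBasis.orthonormal.1, one_pow, mul_one]

end Matrix

theorem sq_max_zero_le_sq {x q : ℝ} (h : x ≤ q) : max x 0 ^ 2 ≤ q ^ 2 := by
  rcases le_total x 0 with hx | hx
  · simp [max_eq_right hx, sq_nonneg]
  · rw [max_eq_left hx]
    exact pow_le_pow_left₀ hx h 2

theorem sq_min_zero_le_sq {y q : ℝ} (h : q ≤ y) : min y 0 ^ 2 ≤ q ^ 2 := by
  have := sq_max_zero_le_sq (neg_le_neg h)
  rwa [← neg_zero, max_neg_neg, neg_sq, neg_sq] at this

theorem mul_sq_sub_le_two_mul_sum_sq {ι κ : Type*} [Fintype ι] [Fintype κ]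
    {q : ι ⊕ κ → ℝ} {x y : ℝ} {k : ℕ} (hyx : y ≤ x) (hx : ∀ i, x ≤ q (.inl i))
    (hy : ∀ j, q (.inr j) ≤ y) (hι : k ≤ Fintype.card ι) (hκ : k ≤ Fintype.card κ) :
    k * (x - y) ^ 2 ≤ 2 * ∑ i, q i ^ 2 := by
  have h_inl : k * max x 0 ^ 2 ≤ ∑ i, q (.inl i) ^ 2 :=
    calc (k : ℝ) * max x 0 ^ 2 ≤ Fintype.card ι * max x 0 ^ 2 := by gcongr
      _ ≤ ∑ i, q (.inl i) ^ 2 := by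
        simpa using card_nsmul_le_sum univ _ _ fun i _ => sq_max_zero_le_sq (hx i)
  have h_inr : k * min y 0 ^ 2 ≤ ∑ j, q (.inr j) ^ 2 :=
    calc (k : ℝ) * min y 0 ^ 2 ≤ Fintype.card κ * min y 0 ^ 2 := by gcongr
      _ ≤ ∑ j, q (.inr j) ^ 2 := by
        simpa using card_nsmul_le_sum univ _ _ fun j _ => sq_min_zero_le_sq (hy j)
  have h_sub : (x - y) ^ 2 ≤ 2 * (max x 0 ^ 2 + min y 0 ^ 2) := by
    have h0 : 0 ≤ x - y := sub_nonneg.2 hyx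
    have h1 : x - y ≤ max x 0 - min y 0 := sub_le_sub (le_max_left _ _) (min_le_left _ _)
    nlinarith [sq_nonneg (max x 0 + min y 0)]
  rw [Fintype.sum_sum_type]
  nlinarith [Nat.cast_nonneg (α := ℝ) k]

theorem le_div_sqrt_of_mul_sq_le {c d N : ℝ} (hc : 0 < c) (hN : 0 ≤ N)
    (h : c * d ^ 2 ≤ N ^ 2) : d ≤ N / √c := by
  rw [le_div_iff₀ (Real.sqrt_pos.2 hc)]
  refine le_of_sq_le_sq ?_ hN
  rw [mul_pow, Real.sq_sqrt hc.le]
  linarith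

theorem Orthonormal.mul_sq_sub_le_of_sq_eq_one {m ι κ : Type*} [Fintype m] [DecidableEq m]
    [Fintype ι] [Fintype κ] {C : Matrix m m ℝ} (hC : ∀ a b, C a b ^ 2 = 1)
    {F : ι ⊕ κ → EuclideanSpace ℝ m} (hF : Orthonormal ℝ F) {x y : ℝ} {k : ℕ} (hyx : y ≤ x)
    (hx : ∀ i, x ≤ ⟪F (.inl i), Matrix.toEuclideanLin C (F (.inl i))⟫)
    (hy : ∀ j, ⟪F (.inr j), Matrix.toEuclideanLin C (F (.inr j))⟫ ≤ y)
    (hι : k ≤ Fintype.card ι) (hκ : k ≤ Fintype.card κ) :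
    k * (x - y) ^ 2 ≤ 2 * Fintype.card m ^ 2 := by
  have h_frob := hF.sum_inner_toEuclideanLin_sq_le C
  simp only [hC, sum_const, card_univ, nsmul_eq_mul, mul_one] at h_frob
  nlinarith [mul_sq_sub_le_two_mul_sum_sq (q := fun l => ⟪F l, Matrix.toEuclideanLin C (F l)⟫)
    hyx hx hy hι hκ]

theorem Matrix.IsHermitian.sub_le_card_div_sqrt_of_zero_one {m : Type*} [Fintype m]
    [DecidableEq m] {A : Matrix m m ℝ} (hA : A.IsHermitian)
    (hA01 : ∀ a b, A a b = 0 ∨ A a b = 1) {k : ℕ} (hk : 0 < k) {α γ : ℝ} (hγα : γ < α)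
    (hα : k + 1 ≤ #{i | α ≤ hA.eigenvalues i}) (hγ : k ≤ #{i | hA.eigenvalues i ≤ γ}) :
    α - γ ≤ Fintype.card m / √(2 * k) := by
  set u := hA.eigenvectorBasis
  set S : Finset m := {i | α ≤ hA.eigenvalues i}
  set T : Finset m := {i | hA.eigenvalues i ≤ γ}
  set K := Submodule.span ℝ (u '' S) ⊓ (ℝ ∙ (WithLp.toLp 2 1 : EuclideanSpace ℝ m))ᗮ
  have hK : k ≤ Module.finrank ℝ K := by
    have : _ ≤ Module.finrank ℝ K + 1 :=
      (Submodule.span ℝ (u '' S)).finrank_le_finrank_inf_orthogonal_add_one _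
    rw [u.orthonormal.finrank_span_image] at this
    omega
  set bK := stdOrthonormalBasis ℝ K
  set F := Sum.elim (fun j => (bK j : EuclideanSpace ℝ m)) (fun t : T => u t)
  have hF : Orthonormal ℝ F := by
    refine .sumElim (bK.orthonormal.comp_linearIsometry K.subtypeₗᵢ)
      (u.orthonormal.comp _ Subtype.val_injective) fun j t => ?_
    have ht : (t : m) ∉ (S : Set m) := fun h =>
      ((mem_filter.1 (mem_coe.1 h)).2.trans (mem_filter.1 t.2).2).not_gt hγα
    exact inner_eq_zero_symm.1 (u.orthonormal.inner_eq_zero_of_mem_span_image ht (bK j).2.1)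
  set C : Matrix m m ℝ := Matrix.of fun i j => 2 * A i j - 1
  set q := fun l => ⟪F l, Matrix.toEuclideanLin C (F l)⟫
  have hq_inl : ∀ j, 2 * α ≤ q (.inl j) := by
    intro j
    have h_one : ⟪WithLp.toLp 2 1, (bK j : EuclideanSpace ℝ m)⟫ = 0 :=
      Submodule.mem_orthogonal_singleton_iff_inner_right.1 (bK j).2.2
    have h_ray := u.mul_norm_sq_le_inner_apply_self_of_mem_span
      hA.toEuclideanLin_eigenvectorBasis (fun i hi => (mem_filter.1 hi).2) (bK j).2.1
    rw [show ‖(bK j : EuclideanSpace ℝ m)‖ = 1 from hF.1 (.inl j), one_pow, mul_one] at h_ray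
    simp only [q, F, Sum.elim_inl, C, Matrix.inner_toEuclideanLin_two_mul_sub_one, h_one]
    linarith
  have hq_inr : ∀ t, q (.inr t) ≤ 2 * γ := by
    intro t
    have h_ev : ⟪u t, Matrix.toEuclideanLin A (u t)⟫ = hA.eigenvalues t :=
      hA.inner_eigenvectorBasis_toEuclideanLin t
    simp only [q, F, Sum.elim_inr, C, Matrix.inner_toEuclideanLin_two_mul_sub_one, h_ev]
    nlinarith [(mem_filter.1 t.2).2, sq_nonneg ⟪(WithLp.toLp 2 1 : EuclideanSpace ℝ m), u t⟫]
  have hC : ∀ a b, C a b ^ 2 = 1 := fun a b => by rcases hA01 a b with h | h <;> norm_num [C, h]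
  have := hF.mul_sq_sub_le_of_sq_eq_one hC (by linarith) hq_inl hq_inr (by simpa using hK)
    (by simpa using hγ)
  exact le_div_sqrt_of_mul_sq_le (by positivity) (by positivity) (by nlinarith)

theorem Finset.card_filter_apply_eq_of_map_univ_eq {ι α : Type*} [Fintype ι] {f g : ι → α}
    (h : univ.val.map f = univ.val.map g) (p : α → Prop) [DecidablePred p] :
    #{i | p (f i)} = #{i | p (g i)} := by
  simpa [Multiset.countP_map, Finset.card, Finset.filter] using congrArg (Multiset.countP p) h

/-- For an integer `k ≥ 1` and a symmetric `n × n` `(0,1)`-matrix `A` with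
`2k ≤ n` and eigenvalues `μ` in nonincreasing order,
`λ_{k+1}(A) - λ_{n-k+1}(A) ≤ n / √(2k)`. -/
theorem spread_k_kminus1_upper_bound (n k : ℕ) (hk : 1 ≤ k) (hn : 2 * k ≤ n)
    (A : Matrix (Fin n) (Fin n) ℝ) (hA : A.IsHermitian)
    (hA01 : ∀ a b, A a b = 0 ∨ A a b = 1)
    (μ : Fin n → ℝ) (hmono : Antitone μ)
    (hperm : Finset.univ.val.map μ = Finset.univ.val.map hA.eigenvalues) :
    μ ⟨k, by omega⟩ - μ ⟨n - k, by omega⟩ ≤ (n : ℝ) / Real.sqrt (2 * (k : ℝ)) := by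
  set top : Fin n := ⟨k, by omega⟩
  set bot : Fin n := ⟨n - k, by omega⟩
  rcases le_or_gt (μ top) (μ bot) with hle | hlt
  · have : (0 : ℝ) ≤ n / √(2 * k) := by positivity
    linarith
  have h_top : k + 1 ≤ #{i | μ top ≤ hA.eigenvalues i} := by
    rw [← card_filter_apply_eq_of_map_univ_eq hperm (μ top ≤ ·)]
    calc k + 1 = #(Iic top) := (Fin.card_Iic top).symm
      _ ≤ _ := card_le_card fun i hi => mem_filter.2 ⟨mem_univ _, hmono (mem_Iic.1 hi)⟩
  have h_bot : k ≤ #{i | hA.eigenvalues i ≤ μ bot} := by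
    rw [← card_filter_apply_eq_of_map_univ_eq hperm (· ≤ μ bot)]
    calc k = #(Ici bot) := by rw [Fin.card_Ici]; change k = n - (n - k); omega
      _ ≤ _ := card_le_card fun i hi => mem_filter.2 ⟨mem_univ _, hmono (mem_Ici.1 hi)⟩
  simpa using hA.sub_le_card_div_sqrt_of_zero_one hA01 hk hlt h_top h_bot
end

section
/- Let A be a symmetric n×n matrix with entries in {0,1}, with eigenvalues λ_1 ≥ ⋯ ≥ λ_n, satisfying λ_2(A) − λ_n(A) = n/√2. Then the multiset of eigenvalues of A is exactly: λ_1 = n/2, λ_2 = (√2/4)·n, λ_3 = ⋯ = λ_{n−1} = 0, and λ_n = −(√2/4)·n. -/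
/-!
Let `m` be the number of ones in `A`. Then `∑ λᵢ² = tr A² = m`, and the all-ones vector gives
`m ≤ n λ₁`, so `λ₁² ≥ m² / n²`. Writing `λ₂² + λₙ² = ((λ₂ - λₙ)² + (λ₂ + λₙ)²) / 2` with
`λ₂ - λₙ = n / √2`, the identity `∑ λᵢ² = m` then yields
`(m - n²/2)² + n² (λ₂ + λₙ)² / 2 + n² ∑_{i ≠ 1, 2, n} λᵢ² ≤ 0`,
so all three terms vanish, which pins down the whole spectrum.
-/

open scoped ComplexOrder

namespace Matrix

variable {𝕜 ι : Type*} [RCLike 𝕜] [Fintype ι] [DecidableEq ι]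

theorem IsHermitian.trace_pow_eq_sum_eigenvalues_pow {A : Matrix ι ι 𝕜} (hA : A.IsHermitian)
    (k : ℕ) : (A ^ k).trace = ∑ i, (hA.eigenvalues i : 𝕜) ^ k := by
  conv_lhs => rw [hA.spectral_theorem, ← map_pow, Unitary.conjStarAlgAut_apply, trace_mul_cycle,
    Unitary.coe_star_mul_self, one_mul, diagonal_pow, trace_diagonal]
  simp

theorem IsHermitian.posSemidef_algebraMap_sub_of_eigenvalues_le {A : Matrix ι ι 𝕜}
    (hA : A.IsHermitian) {c : ℝ} (hc : ∀ i, hA.eigenvalues i ≤ c) :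
    (algebraMap ℝ (Matrix ι ι 𝕜) c - A).PosSemidef := by
  have hB : (algebraMap ℝ (Matrix ι ι 𝕜) c - A).IsHermitian :=
    (IsSelfAdjoint.algebraMap _ (IsSelfAdjoint.all c)).sub hA
  rw [posSemidef_iff_isHermitian_and_spectrum_nonneg, hB.spectrum_eq_image_range]
  refine ⟨hB, ?_⟩
  rintro _ ⟨_, ⟨i, rfl⟩, rfl⟩
  have hi := hB.eigenvalues_mem_spectrum_real i
  rw [← spectrum.singleton_sub_eq, hA.spectrum_real_eq_range_eigenvalues] at hi
  obtain ⟨_, rfl, _, ⟨j, rfl⟩, hj⟩ := hi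
  simpa [← hj] using hc j

theorem sum_apply_le_of_posSemidef_algebraMap_sub {A : Matrix ι ι ℝ} {c : ℝ}
    (h : (algebraMap ℝ (Matrix ι ι ℝ) c - A).PosSemidef) :
    ∑ i, ∑ j, A i j ≤ c * Fintype.card ι := by
  simpa [sub_mulVec, dotProduct, mulVec, algebraMap_eq_diagonal, diagonal_apply, sub_nonneg,
    mul_comm] using h.dotProduct_mulVec_nonneg (fun _ => 1)

theorem IsSymm.trace_sq_eq_sum_apply {A : Matrix ι ι ℝ} (hA : A.IsSymm)
    (h01 : ∀ i j, A i j = 0 ∨ A i j = 1) : (A ^ 2).trace = ∑ i, ∑ j, A i j := by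
  refine Finset.sum_congr rfl fun i _ => ?_
  rw [diag_apply, sq, mul_apply]
  refine Finset.sum_congr rfl fun j _ => ?_
  rw [hA.apply i j]
  rcases h01 i j with h | h <;> simp [h]

end Matrix

section MultisetMap

variable {ι κ α : Type*} [Fintype ι] [Fintype κ] {u : ι → α} {v : κ → α}

theorem Fintype.sum_comp_eq_of_map_univ_eq {M : Type*} [AddCommMonoid M]
    (h : Finset.univ.val.map u = Finset.univ.val.map v) (f : α → M) :
    ∑ i, f (u i) = ∑ k, f (v k) := by
  simpa [Multiset.map_map] using congr_arg (fun s => (s.map f).sum) h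

theorem Fintype.exists_eq_of_map_univ_eq (h : Finset.univ.val.map u = Finset.univ.val.map v)
    (k : κ) : ∃ i, u i = v k := by
  simpa using (h ▸ Multiset.mem_map_of_mem v (Finset.mem_univ k) : v k ∈ Finset.univ.val.map u)

end MultisetMap

theorem Fintype.sum_eq_add_add_add_sum_sdiff {ι M : Type*} [Fintype ι] [DecidableEq ι]
    [AddCommMonoid M] (f : ι → M) {i j k : ι} (hij : i ≠ j) (hik : i ≠ k) (hjk : j ≠ k) :
    ∑ x, f x = f i + f j + f k + ∑ x ∈ Finset.univ \ {i, j, k}, f x := by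
  rw [← Finset.sum_sdiff (Finset.subset_univ {i, j, k}), Finset.sum_insert (by simp [hij, hik]),
    Finset.sum_pair hjk]
  abel

theorem spread_equality_of_sum_sq {n m a b c t : ℝ} (hn : 0 < n) (hm : m ≤ a * n)
    (hsum : a ^ 2 + b ^ 2 + c ^ 2 + t = m) (ht : 0 ≤ t) (hbc : b - c = n / √2) :
    a = n / 2 ∧ b = √2 / 4 * n ∧ c = -(√2 / 4 * n) ∧ t = 0 := by
  have hs : √2 ^ 2 = 2 := Real.sq_sqrt (by norm_num)
  have hbc2 : (b - c) ^ 2 * 2 = n ^ 2 := by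
    rw [hbc, div_pow, hs]; field_simp
  have hm0 : 0 ≤ m := by rw [← hsum]; positivity
  have hm2 : m ^ 2 ≤ (a * n) ^ 2 := pow_le_pow_left₀ hm0 hm 2
  have key : (m - n ^ 2 / 2) ^ 2 + n ^ 2 * (b + c) ^ 2 / 2 + n ^ 2 * t ≤ 0 := by
    nlinarith
  have e1 := sq_nonneg (m - n ^ 2 / 2)
  have e2 : 0 ≤ n ^ 2 * (b + c) ^ 2 / 2 := by positivity
  have e3 : 0 ≤ n ^ 2 * t := by positivity
  have hmn : m = n ^ 2 / 2 := by
    simpa [sub_eq_zero] using (show (m - n ^ 2 / 2) ^ 2 = 0 by linarith)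
  have hbc0 : b + c = 0 := by
    simpa [hn.ne'] using (show n ^ 2 * (b + c) ^ 2 / 2 = 0 by linarith)
  have ht0 : t = 0 := by
    simpa [hn.ne'] using (show n ^ 2 * t = 0 by linarith)
  have hb : b = √2 / 4 * n := by
    rw [show b = n / √2 / 2 by linarith]
    field_simp
    rw [hs]; norm_num
  refine ⟨?_, hb, by linarith, ht0⟩
  nlinarith

/-- If a symmetric `n × n` `(0,1)`-matrix `A`, with eigenvalues `μ` in
nonincreasing order, satisfies `λ_2(A) - λ_n(A) = n / √2`, then its spectrum is exactly
`λ_1 = n/2`, `λ_2 = (√2/4) n`, `λ_3 = ⋯ = λ_{n-1} = 0` and `λ_n = -(√2/4) n`. -/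
theorem spread_10_equality_spectrum (n : ℕ) (hn : 2 ≤ n)
    (A : Matrix (Fin n) (Fin n) ℝ) (hA : A.IsHermitian)
    (hA01 : ∀ a b, A a b = 0 ∨ A a b = 1)
    (μ : Fin n → ℝ) (hmono : Antitone μ)
    (hperm : Finset.univ.val.map μ = Finset.univ.val.map hA.eigenvalues)
    (heq : μ ⟨1, by omega⟩ - μ ⟨n - 1, by omega⟩ = (n : ℝ) / Real.sqrt 2) :
    μ ⟨0, by omega⟩ = (n : ℝ) / 2 ∧
    μ ⟨1, by omega⟩ = Real.sqrt 2 / 4 * (n : ℝ) ∧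
    (∀ k : Fin n, 2 ≤ (k : ℕ) → (k : ℕ) ≤ n - 2 → μ k = 0) ∧
    μ ⟨n - 1, by omega⟩ = -(Real.sqrt 2 / 4 * (n : ℝ)) := by
  have hsq : ∑ i, μ i ^ 2 = ∑ i, ∑ j, A i j := by
    rw [Fintype.sum_comp_eq_of_map_univ_eq hperm (· ^ 2),
      ← (Matrix.isHermitian_iff_isSymm.mp hA).trace_sq_eq_sum_apply hA01,
      hA.trace_pow_eq_sum_eigenvalues_pow]
    simp
  have hmax : ∀ i, hA.eigenvalues i ≤ μ ⟨0, by omega⟩ := fun i => by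
    obtain ⟨j, hj⟩ := Fintype.exists_eq_of_map_univ_eq hperm i
    exact hj ▸ hmono (Nat.zero_le j)
  have hray := Matrix.sum_apply_le_of_posSemidef_algebraMap_sub
    (hA.posSemidef_algebraMap_sub_of_eigenvalues_le hmax)
  have h1N : (⟨1, by omega⟩ : Fin n) ≠ ⟨n - 1, by omega⟩ := fun h => by
    rw [h, sub_self] at heq
    exact (div_pos (by positivity) (by positivity)).ne heq
  have hsplit := Fintype.sum_eq_add_add_add_sum_sdiff (μ · ^ 2) (i := ⟨0, by omega⟩)
    (by simp [Fin.ext_iff]) (by simp [Fin.ext_iff]; omega) h1N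
  obtain ⟨h0, h1, hN, hrest⟩ := spread_equality_of_sum_sq (by positivity) (by simpa using hray)
    (hsplit ▸ hsq) (Finset.sum_nonneg fun i _ => sq_nonneg (μ i)) heq
  refine ⟨h0, h1, fun k hk2 hkn => ?_, hN⟩
  have hk : k ∈ Finset.univ \ {⟨0, by omega⟩, ⟨1, by omega⟩, ⟨n - 1, by omega⟩} := by
    simp only [Finset.mem_sdiff, Finset.mem_univ, Finset.mem_insert, Finset.mem_singleton,
      Fin.ext_iff, not_or, true_and]
    omega
  exact pow_eq_zero_iff two_ne_zero |>.mp ((Finset.sum_eq_zero_iff_of_nonneg fun i _ =>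
    sq_nonneg (μ i)).mp hrest k hk)
end
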